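/- arXiv:2002.02700 — 2 statements merged into one kernel-verified Lean document; each statement's English description precedes it below -/
import Mathlib

section
/- Let L be a set of lines in AG(3,q) of size x(q^2+q+1) such that |L ∩ R| = |L ∩ R'| for every pair of conjugated switching sets R, R'. Then |L ∩ S| = x for every line spread S of AG(3,q). -/
open scoped Classical

namespace AG

variable (F : Type) [Field F] [Fintype F]

/-- A line of AG(3,q): the set of points a + t•d for a fixed a and direction d ≠ 0. -/
def IsLine (L : Set (Fin 3 → F)) : Prop :=
  ∃ a d : Fin 3 → F, d ≠ 0 ∧ L = {p | ∃ t : F, p = a + t • d}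

/-- A partial line spread of AG(3,q): a set of pairwise disjoint lines. -/
def IsPartialSpread (R : Set (Set (Fin 3 → F))) : Prop :=
  (∀ L ∈ R, IsLine F L) ∧ ∀ L ∈ R, ∀ M ∈ R, L ≠ M → Disjoint L M

/-- A line spread of AG(3,q): a set of lines such that every point lies on
exactly one of them. -/
def IsSpread (S : Set (Set (Fin 3 → F))) : Prop :=
  (∀ L ∈ S, IsLine F L) ∧ ∀ p : Fin 3 → F, ∃! L, L ∈ S ∧ p ∈ L

/-- A Cameron-Liebler line class of parameter x in AG(3,q): a set of lines meeting
every line spread in exactly x lines. -/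
def IsCL (𝓛 : Set (Set (Fin 3 → F))) (x : ℕ) : Prop :=
  (∀ L ∈ 𝓛, IsLine F L) ∧ ∀ S, IsSpread F S → (𝓛 ∩ S).ncard = x

end AG

set_option linter.unusedSectionVars false

namespace AGaux

variable {F : Type} [Field F] [Fintype F]

def lineAD (a d : Fin 3 → F) : Set (Fin 3 → F) := {p | ∃ t : F, p = a + t • d}

lemma isLine_iff {L : Set (Fin 3 → F)} :
    AG.IsLine F L ↔ ∃ a d : Fin 3 → F, d ≠ 0 ∧ L = lineAD a d := Iff.rfl

def spanSet (d : Fin 3 → F) : Set (Fin 3 → F) := Set.range (fun t : F => t • d)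

def dirSet (L : Set (Fin 3 → F)) : Set (Fin 3 → F) := {v | ∃ p ∈ L, ∃ q ∈ L, v = p - q}

def sigmaSpread (d : Fin 3 → F) : Set (Set (Fin 3 → F)) := {L | ∃ a, L = lineAD a d}

lemma self_mem_lineAD (a d : Fin 3 → F) : a ∈ lineAD a d := ⟨0, by simp⟩

lemma lineAD_eq_of_mem {a d p : Fin 3 → F} (hp : p ∈ lineAD a d) :
    lineAD p d = lineAD a d := by
  obtain ⟨t, rfl⟩ := hp
  ext q
  constructor
  · rintro ⟨s, rfl⟩; exact ⟨t + s, by module⟩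
  · rintro ⟨s, rfl⟩; exact ⟨s - t, by module⟩

lemma isSpread_sigma {d : Fin 3 → F} (hd : d ≠ 0) : AG.IsSpread F (sigmaSpread d) := by
  constructor
  · rintro L ⟨a, rfl⟩; exact ⟨a, d, hd, rfl⟩
  · intro p
    refine ⟨lineAD p d, ⟨⟨p, rfl⟩, self_mem_lineAD p d⟩, ?_⟩
    rintro L ⟨⟨a, rfl⟩, hp⟩
    exact (lineAD_eq_of_mem hp).symm

lemma dirSet_lineAD (a d : Fin 3 → F) : dirSet (lineAD a d) = spanSet d := by
  ext v
  constructor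
  · rintro ⟨p, ⟨t, rfl⟩, q, ⟨s, rfl⟩, rfl⟩
    exact ⟨t - s, by module⟩
  · rintro ⟨t, rfl⟩
    exact ⟨a + t • d, ⟨t, rfl⟩, a, ⟨0, by simp⟩, by module⟩

lemma spanSet_smul {c : F} (hc : c ≠ 0) (d : Fin 3 → F) : spanSet (c • d) = spanSet d := by
  ext v
  constructor
  · rintro ⟨t, rfl⟩; exact ⟨t * c, by module⟩
  · rintro ⟨t, rfl⟩
    refine ⟨t * c⁻¹, ?_⟩
    show (t * c⁻¹) • c • d = t • d
    rw [smul_smul, mul_assoc, inv_mul_cancel₀ hc, mul_one]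

lemma spanSet_eq_iff {v d : Fin 3 → F} (hv : v ≠ 0) (hd : d ≠ 0) :
    spanSet v = spanSet d ↔ ∃ c : F, c ≠ 0 ∧ v = c • d := by
  constructor
  · intro h
    have : v ∈ spanSet d := h ▸ ⟨1, show (1:F) • v = v from one_smul F v⟩
    obtain ⟨c, rfl⟩ := this
    exact ⟨c, fun h0 => hv (by simp [h0]), rfl⟩
  · rintro ⟨c, hc, rfl⟩; exact spanSet_smul hc d

lemma lineAD_smul {c : F} (hc : c ≠ 0) (a d : Fin 3 → F) :
    lineAD a (c • d) = lineAD a d := by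
  ext q
  constructor
  · rintro ⟨t, rfl⟩; exact ⟨t * c, by module⟩
  · rintro ⟨t, rfl⟩
    exact ⟨t * c⁻¹, by rw [smul_smul, mul_assoc, inv_mul_cancel₀ hc, mul_one]⟩

lemma spread_pairwise_disjoint {S : Set (Set (Fin 3 → F))} (hS : AG.IsSpread F S)
    {L M : Set (Fin 3 → F)} (hL : L ∈ S) (hM : M ∈ S) (hne : L ≠ M) : Disjoint L M := by
  rw [Set.disjoint_left]
  intro p hpL hpM
  obtain ⟨N, -, huniq⟩ := hS.2 p
  exact hne ((huniq L ⟨hL, hpL⟩).trans (huniq M ⟨hM, hpM⟩).symm)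

lemma sUnion_sdiff_subset {S S' : Set (Set (Fin 3 → F))} (hS : AG.IsSpread F S)
    (hS' : AG.IsSpread F S') : ⋃₀ (S \ S') ⊆ ⋃₀ (S' \ S) := by
  rintro p ⟨L, ⟨hLS, hLS'⟩, hp⟩
  obtain ⟨M, ⟨hM, hpM⟩, -⟩ := hS'.2 p
  refine ⟨M, ⟨hM, fun hMS => ?_⟩, hpM⟩
  obtain ⟨N, -, huniq⟩ := hS.2 p
  exact hLS' (((huniq L ⟨hLS, hp⟩).trans (huniq M ⟨hMS, hpM⟩).symm) ▸ hM)

lemma spread_inter_const (𝓛 : Set (Set (Fin 3 → F)))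
    (hswitch : ∀ R R' : Set (Set (Fin 3 → F)),
      AG.IsPartialSpread F R → AG.IsPartialSpread F R' →
      Disjoint R R' → ⋃₀ R = ⋃₀ R' → (𝓛 ∩ R).ncard = (𝓛 ∩ R').ncard)
    {S S' : Set (Set (Fin 3 → F))} (hS : AG.IsSpread F S) (hS' : AG.IsSpread F S') :
    (𝓛 ∩ S).ncard = (𝓛 ∩ S').ncard := by
  have hps : ∀ {T T' : Set (Set (Fin 3 → F))}, AG.IsSpread F T → AG.IsSpread F T' →
      AG.IsPartialSpread F (T \ T') := by
    intro T T' hT hT'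
    exact ⟨fun L hL => hT.1 L hL.1,
      fun L hL M hM hne => spread_pairwise_disjoint hT hL.1 hM.1 hne⟩
  have hsw : (𝓛 ∩ (S \ S')).ncard = (𝓛 ∩ (S' \ S)).ncard := by
    refine hswitch _ _ (hps hS hS') (hps hS' hS) disjoint_sdiff_sdiff
      (Set.Subset.antisymm (sUnion_sdiff_subset hS hS') (sUnion_sdiff_subset hS' hS))
  have key : ∀ T T' : Set (Set (Fin 3 → F)),
      (𝓛 ∩ T).ncard = (𝓛 ∩ (T ∩ T')).ncard + (𝓛 ∩ (T \ T')).ncard := by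
    intro T T'
    have h1 : 𝓛 ∩ T = (𝓛 ∩ (T ∩ T')) ∪ (𝓛 ∩ (T \ T')) := by
      rw [← Set.inter_union_distrib_left, Set.inter_union_diff]
    rw [h1, Set.ncard_union_eq ?_ (Set.toFinite _) (Set.toFinite _)]
    exact Set.disjoint_left.mpr fun L hL hR => hR.2.2 hL.2.2
  rw [key S S', key S' S, Set.inter_comm S' S, hsw]

end AGaux

namespace AGaux

variable {F : Type} [Field F] [Fintype F]

def spanFamily (F : Type) [Field F] : Set (Set (Fin 3 → F)) :=
  {s | ∃ d : Fin 3 → F, d ≠ 0 ∧ s = spanSet d}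

lemma cube_identity {q : ℕ} (hq : 1 ≤ q) : (q ^ 2 + q + 1) * (q - 1) = q ^ 3 - 1 := by
  obtain ⟨m, rfl⟩ : ∃ m, q = m + 1 := ⟨q - 1, by omega⟩
  have h3 : (m + 1) ^ 3 = m ^ 3 + 3 * m ^ 2 + 3 * m + 1 := by ring
  rw [h3]
  simp only [Nat.add_sub_cancel]
  ring

lemma card_spanFamily : (spanFamily F).ncard = (Fintype.card F) ^ 2 + Fintype.card F + 1 := by
  classical
  set q := Fintype.card F with hq
  have hq1 : 1 < q := Fintype.one_lt_card
  set N : Finset (Fin 3 → F) := Finset.univ.erase 0 with hN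
  set Pf : Finset (Set (Fin 3 → F)) := (spanFamily F).toFinite.toFinset with hPf
  have H : ∀ v ∈ N, spanSet v ∈ Pf := by
    intro v hv
    rw [hPf, Set.Finite.mem_toFinset]
    exact ⟨v, Finset.ne_of_mem_erase hv, rfl⟩
  have hcount := Finset.card_eq_sum_card_fiberwise H
  have hfiber : ∀ s ∈ Pf, (N.filter (fun v => spanSet v = s)).card = q - 1 := by
    intro s hs
    rw [hPf, Set.Finite.mem_toFinset] at hs
    obtain ⟨d, hd, rfl⟩ := hs
    have himg : N.filter (fun v => spanSet v = spanSet d)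
        = (Finset.univ.erase (0 : F)).image (fun c => c • d) := by
      ext v
      simp only [Finset.mem_filter, Finset.mem_image, Finset.mem_erase, Finset.mem_univ,
        and_true, hN]
      constructor
      · rintro ⟨hv, hsp⟩
        obtain ⟨c, hc, rfl⟩ := (spanSet_eq_iff hv hd).mp hsp
        exact ⟨c, hc, rfl⟩
      · rintro ⟨c, hc, rfl⟩
        have hvne : c • d ≠ 0 := smul_ne_zero hc hd
        exact ⟨hvne, (spanSet_eq_iff hvne hd).mpr ⟨c, hc, rfl⟩⟩
    rw [himg, Finset.card_image_of_injective _ (smul_left_injective F hd),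
      Finset.card_erase_of_mem (Finset.mem_univ _), Finset.card_univ]
  rw [Finset.sum_congr rfl hfiber, Finset.sum_const, smul_eq_mul] at hcount
  have hNcard : N.card = q ^ 3 - 1 := by
    rw [hN, Finset.card_erase_of_mem (Finset.mem_univ _), Finset.card_univ,
      Fintype.card_fun, Fintype.card_fin, hq]
  rw [hNcard] at hcount
  have hkey : Pf.card * (q - 1) = (q ^ 2 + q + 1) * (q - 1) := by
    rw [cube_identity (le_of_lt hq1)]; omega
  have hPcard : Pf.card = q ^ 2 + q + 1 :=
    Nat.eq_of_mul_eq_mul_right (by omega) hkey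
  rw [Set.ncard_eq_toFinset_card' , Set.toFinite_toFinset] at *
  rw [← hPf]; exact hPcard

end AGaux

/-- If L is a set of lines of AG(3,q) of size x(q^2+q+1) meeting both members of every pair
of conjugated switching sets in equally many lines, then L meets every line spread of
AG(3,q) in exactly x lines. -/
theorem CL_of_switching_sets (F : Type) [Field F] [Fintype F]
    (𝓛 : Set (Set (Fin 3 → F))) (x : ℕ)
    (hlines : ∀ L ∈ 𝓛, AG.IsLine F L)
    (hsize : 𝓛.ncard = x * ((Fintype.card F) ^ 2 + Fintype.card F + 1))
    (hswitch : ∀ R R' : Set (Set (Fin 3 → F)),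
      AG.IsPartialSpread F R → AG.IsPartialSpread F R' →
      Disjoint R R' → ⋃₀ R = ⋃₀ R' → (𝓛 ∩ R).ncard = (𝓛 ∩ R').ncard) :
    ∀ S, AG.IsSpread F S → (𝓛 ∩ S).ncard = x := by
  classical
  intro S hS
  set q := Fintype.card F with hq
  set c := (𝓛 ∩ S).ncard with hc
  set Lf : Finset (Set (Fin 3 → F)) := 𝓛.toFinite.toFinset with hLfdef
  set Pf : Finset (Set (Fin 3 → F)) := (AGaux.spanFamily F).toFinite.toFinset with hPfdef
  have H : ∀ L ∈ Lf, AGaux.dirSet L ∈ Pf := by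
    intro L hL
    rw [hLfdef, Set.Finite.mem_toFinset] at hL
    obtain ⟨a, d, hd, rfl⟩ := AGaux.isLine_iff.mp (hlines L hL)
    rw [hPfdef, Set.Finite.mem_toFinset]
    exact ⟨d, hd, AGaux.dirSet_lineAD a d⟩
  have hcount := Finset.card_eq_sum_card_fiberwise H
  have hfiber : ∀ s ∈ Pf, (Lf.filter (fun L => AGaux.dirSet L = s)).card = c := by
    intro s hs
    rw [hPfdef, Set.Finite.mem_toFinset] at hs
    obtain ⟨d, hd, rfl⟩ := hs
    have heq : Lf.filter (fun L => AGaux.dirSet L = AGaux.spanSet d)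
        = (𝓛 ∩ AGaux.sigmaSpread d).toFinite.toFinset := by
      ext L
      rw [Finset.mem_filter, hLfdef, Set.Finite.mem_toFinset, Set.Finite.mem_toFinset]
      constructor
      · rintro ⟨hL, hdir⟩
        refine ⟨hL, ?_⟩
        obtain ⟨a, d', hd', rfl⟩ := AGaux.isLine_iff.mp (hlines L hL)
        rw [AGaux.dirSet_lineAD] at hdir
        obtain ⟨cc, hcc, rfl⟩ := (AGaux.spanSet_eq_iff hd' hd).mp hdir
        exact ⟨a, AGaux.lineAD_smul hcc a d⟩
      · rintro ⟨hL, a, rfl⟩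
        exact ⟨hL, AGaux.dirSet_lineAD a d⟩
    rw [heq, ← Set.ncard_eq_toFinset_card]
    exact AGaux.spread_inter_const 𝓛 hswitch (AGaux.isSpread_sigma hd) hS
  rw [Finset.sum_congr rfl hfiber, Finset.sum_const, smul_eq_mul] at hcount
  have h1 : 𝓛.ncard = Lf.card := Set.ncard_eq_toFinset_card 𝓛 (Set.toFinite 𝓛)
  have h2 : Pf.card = q ^ 2 + q + 1 := by
    rw [hPfdef, ← Set.ncard_eq_toFinset_card]
    exact AGaux.card_spanFamily
  rw [h2] at hcount
  rw [h1, hcount] at hsize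
  have hpos : 0 < q ^ 2 + q + 1 := by omega
  rw [hc]
  exact Nat.eq_of_mul_eq_mul_left hpos (by rw [hsize]; ring)
end

section
/- Let q ≥ 2 and let s be the number of distinct prime divisors of 2(q+1). Then the number of integers x with 0 ≤ x ≤ q^2 and x(x-1) ≡ 0 (mod 2(q+1)) is at most 2^{s-1} q if q is even, and at most 2^{s-1} q - 2^{s-1} + 2 if q is odd. -/
lemma solCount (m : ℕ) (hm : 0 < m) :
    ((Finset.range m).filter (fun r => r * (r - 1) % m = 0)).card
      ≤ 2 ^ m.primeFactors.card := by
  classical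
  have h2 : (2:ℕ) ^ m.primeFactors.card = m.primeFactors.powerset.card := by
    simp [Finset.card_powerset]
  rw [h2]
  apply Finset.card_le_card_of_injOn (fun r => m.primeFactors.filter (fun p => p ∣ r))
  · intro r _
    simp only [Finset.mem_coe, Finset.mem_powerset]
    exact Finset.filter_subset _ _
  · intro a ha b hb hab
    simp only [Finset.coe_filter, Set.mem_setOf_eq, Finset.mem_range] at ha hb
    have key : ∀ p ∈ m.primeFactors, (p : ℤ) ^ (m.factorization p) ∣ (a : ℤ) - b := by
      intro p hp
      have hpp : p.Prime := Nat.prime_of_mem_primeFactors hp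
      have hpdm : p ^ (m.factorization p) ∣ m := Nat.ordProj_dvd m p
      have step : ∀ r : ℕ, r < m → r * (r - 1) % m = 0 →
          (p ∣ r → p ^ (m.factorization p) ∣ r) ∧
          (¬ p ∣ r → 1 ≤ r ∧ p ^ (m.factorization p) ∣ r - 1) := by
        intro r hrm hr0
        have hmd : m ∣ r * (r - 1) := Nat.dvd_of_mod_eq_zero hr0
        have hpd : p ^ (m.factorization p) ∣ r * (r - 1) := hpdm.trans hmd
        constructor
        · intro hpr
          rcases Nat.eq_zero_or_pos r with h0 | h0
          · simp [h0]
          · have hcop : Nat.Coprime (p ^ (m.factorization p)) (r - 1) := by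
              apply Nat.Coprime.pow_left
              rw [hpp.coprime_iff_not_dvd]
              intro hd
              have h1 : p ∣ r - (r - 1) := Nat.dvd_sub hpr hd
              rw [Nat.sub_sub_self h0] at h1
              exact hpp.one_lt.ne' (Nat.eq_one_of_dvd_one h1 ▸ rfl)
            exact hcop.dvd_of_dvd_mul_right hpd
        · intro hpr
          have h0 : 1 ≤ r := by
            rcases Nat.eq_zero_or_pos r with h0 | h0
            · exact absurd (h0 ▸ dvd_zero p) hpr
            · exact h0
          refine ⟨h0, ?_⟩
          have hcop : Nat.Coprime (p ^ (m.factorization p)) r := by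
            apply Nat.Coprime.pow_left
            rwa [hpp.coprime_iff_not_dvd]
          exact hcop.dvd_of_dvd_mul_left hpd
      have hiff : p ∣ a ↔ p ∣ b := by
        have := Finset.ext_iff.1 hab p
        simp only [Finset.mem_filter] at this
        tauto
      by_cases hpa : p ∣ a
      · have h1 := (step a ha.1 ha.2).1 hpa
        have h2 := (step b hb.1 hb.2).1 (hiff.1 hpa)
        have h1' : (p : ℤ) ^ (m.factorization p) ∣ (a : ℤ) := by exact_mod_cast h1
        have h2' : (p : ℤ) ^ (m.factorization p) ∣ (b : ℤ) := by exact_mod_cast h2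
        exact dvd_sub h1' h2'
      · obtain ⟨ha1, h1⟩ := (step a ha.1 ha.2).2 hpa
        obtain ⟨hb1, h2⟩ := (step b hb.1 hb.2).2 (fun h => hpa (hiff.2 h))
        have h1' : (p : ℤ) ^ (m.factorization p) ∣ (a : ℤ) - 1 := by
          have := Int.natCast_dvd_natCast.2 h1
          rwa [Nat.cast_sub ha1, Nat.cast_pow, Nat.cast_one] at this
        have h2' : (p : ℤ) ^ (m.factorization p) ∣ (b : ℤ) - 1 := by
          have := Int.natCast_dvd_natCast.2 h2
          rwa [Nat.cast_sub hb1, Nat.cast_pow, Nat.cast_one] at this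
        have := dvd_sub h1' h2'
        simpa using this
    set c := ((a : ℤ) - b).natAbs with hc
    by_contra hne
    have hc0 : c ≠ 0 := by
      simp only [hc, ne_eq, Int.natAbs_eq_zero, sub_eq_zero]
      exact_mod_cast fun h => hne (by exact_mod_cast h)
    have hmc : m ∣ c := by
      rw [← Nat.factorization_le_iff_dvd hm.ne' hc0]
      intro p
      rcases Nat.eq_zero_or_pos (m.factorization p) with h0 | h0
      · simp [h0]
      · have hp : p ∈ m.primeFactors := by
          rw [← Nat.support_factorization, Finsupp.mem_support_iff]
          omega
        have hpp : p.Prime := Nat.prime_of_mem_primeFactors hp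
        have hd : p ^ (m.factorization p) ∣ c := by
          have := (key p hp)
          have h' : ((p ^ (m.factorization p) : ℕ) : ℤ) ∣ ((a : ℤ) - b) := by
            push_cast; exact this
          have h2 := Int.natAbs_dvd_natAbs.2 h'
          rwa [Int.natAbs_natCast] at h2
        exact (Nat.Prime.pow_dvd_iff_le_factorization hpp hc0).1 hd
    have hlt : c < m := by
      have h1 := ha.1
      have h2 := hb.1
      omega
    exact absurd (Nat.le_of_dvd (Nat.pos_of_ne_zero hc0) hmc) (by omega)

lemma periodBound (m k N : ℕ) (hm : 0 < m) (hN : N ≤ k * m) :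
    ((Finset.range N).filter (fun x => x * (x - 1) % m = 0)).card
      ≤ k * ((Finset.range m).filter (fun r => r * (r - 1) % m = 0)).card := by
  classical
  have hcard : k * ((Finset.range m).filter (fun r => r * (r - 1) % m = 0)).card
      = ((Finset.range k) ×ˢ ((Finset.range m).filter (fun r => r * (r - 1) % m = 0))).card := by
    rw [Finset.card_product, Finset.card_range]
  rw [hcard]
  apply Finset.card_le_card_of_injOn (fun x => (x / m, x % m))
  · intro x hx
    rw [Finset.mem_coe, Finset.mem_filter, Finset.mem_range] at hx
    have hxN := hx.1
    have hx0 := hx.2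
    have hxkm : x < k * m := lt_of_lt_of_le hxN hN
    refine Finset.mem_product.2 ⟨Finset.mem_range.2 ?_, Finset.mem_filter.2 ⟨Finset.mem_range.2 (Nat.mod_lt _ hm), ?_⟩⟩
    · exact Nat.div_lt_of_lt_mul (mul_comm k m ▸ hxkm)
    · -- x % m is also a solution
      rcases Nat.eq_zero_or_pos (x % m) with h0 | h0
      · simp [h0]
      · have hx1 : 1 ≤ x := le_trans h0 (Nat.mod_le _ _)
        have e1 : x % m ≡ x [MOD m] := (Nat.mod_modEq x m)
        have e2 : (x % m) - 1 ≡ x - 1 [MOD m] := by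
          have : x - 1 = m * (x / m) + (x % m - 1) := by
            have := Nat.div_add_mod x m
            omega
          unfold Nat.ModEq
          rw [this, Nat.mul_add_mod]
        have := (e1.mul e2)
        unfold Nat.ModEq at this
        rw [this, hx0]
  · intro x hx y hy hxy
    simp only [Prod.mk.injEq] at hxy
    have h1 := Nat.div_add_mod x m
    have h2 := Nat.div_add_mod y m
    rw [hxy.1, hxy.2] at h1
    omega

/-- Upper bound on the number of x with 0 ≤ x ≤ q² and x(x-1) ≡ 0 (mod 2(q+1)),
where s is the number of distinct primes dividing 2(q+1). -/
theorem count_solutions_bound (q : ℕ) (hq : 2 ≤ q) :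
    (Even q →
      ((Finset.range (q ^ 2 + 1)).filter
        (fun x => x * (x - 1) % (2 * (q + 1)) = 0)).card
        ≤ 2 ^ ((2 * (q + 1)).primeFactors.card - 1) * q) ∧
    (Odd q →
      ((Finset.range (q ^ 2 + 1)).filter
        (fun x => x * (x - 1) % (2 * (q + 1)) = 0)).card
        ≤ 2 ^ ((2 * (q + 1)).primeFactors.card - 1) * q
          - 2 ^ ((2 * (q + 1)).primeFactors.card - 1) + 2) := by
  set m := 2 * (q + 1) with hm
  have hm0 : 0 < m := by omega
  set s := m.primeFactors.card with hs
  have hs1 : 1 ≤ s := by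
    rw [hs, Nat.one_le_iff_ne_zero, ne_eq, Finset.card_eq_zero]
    intro h
    have : 2 ∈ m.primeFactors := by
      rw [Nat.mem_primeFactors]
      exact ⟨Nat.prime_two, ⟨q+1, rfl⟩, by omega⟩
    simp [h] at this
  have hsol := solCount m hm0
  constructor
  · intro hqe
    obtain ⟨t, ht⟩ := hqe
    have hineq : q ^ 2 + 1 ≤ t * m := by
      have h1 : t * m = (t + t) * (q + 1) := by rw [hm]; ring
      rw [h1, ← ht]
      nlinarith
    have hbound := periodBound m t (q^2+1) hm0 hineq
    calc ((Finset.range (q ^ 2 + 1)).filter (fun x => x * (x - 1) % m = 0)).card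
        ≤ t * ((Finset.range m).filter (fun r => r * (r - 1) % m = 0)).card := hbound
      _ ≤ t * 2 ^ s := Nat.mul_le_mul_left _ hsol
      _ = 2 ^ (s - 1) * q := by
          have h1 : (2:ℕ) ^ s = 2 ^ (s-1) * 2 := by
            conv_lhs => rw [show s = (s-1)+1 from by omega]
            rw [pow_succ]
          rw [h1, ht]; ring
  · intro hqo
    obtain ⟨t, ht⟩ := hqo
    have hsplit : ((Finset.range (q ^ 2 + 1)).filter (fun x => x * (x - 1) % m = 0)).card
        ≤ ((Finset.range (q ^ 2 - 1)).filter (fun x => x * (x - 1) % m = 0)).card + 2 := by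
      have hsub : (Finset.range (q ^ 2 + 1)).filter (fun x => x * (x - 1) % m = 0)
          ⊆ ((Finset.range (q ^ 2 - 1)).filter (fun x => x * (x - 1) % m = 0)) ∪ {q^2-1, q^2} := by
        intro x hx
        simp only [Finset.mem_filter, Finset.mem_range] at hx
        simp only [Finset.mem_union, Finset.mem_filter, Finset.mem_range, Finset.mem_insert,
          Finset.mem_singleton]
        rcases lt_or_ge x (q^2-1) with h | h
        · exact Or.inl ⟨h, hx.2⟩
        · right; omega
      calc _ ≤ (((Finset.range (q ^ 2 - 1)).filter (fun x => x * (x - 1) % m = 0)) ∪ ({q^2-1, q^2} : Finset ℕ)).card :=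
            Finset.card_le_card hsub
        _ ≤ ((Finset.range (q ^ 2 - 1)).filter (fun x => x * (x - 1) % m = 0)).card + ({q^2-1, q^2} : Finset ℕ).card :=
            Finset.card_union_le _ _
        _ ≤ _ := by
            have : ({q^2-1, q^2} : Finset ℕ).card ≤ 2 := Finset.card_insert_le _ _ |>.trans (by simp)
            omega
    have e1 : q ^ 2 = 4*t*t + 4*t + 1 := by rw [ht]; ring
    have e2 : t * m = 4*t*t + 4*t := by rw [hm, ht]; ring
    have hineq : q ^ 2 - 1 ≤ t * m := by
      rw [e2]
      omega
    have hbound := periodBound m t (q^2-1) hm0 hineq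
    have hmain : ((Finset.range (q ^ 2 - 1)).filter (fun x => x * (x - 1) % m = 0)).card
        ≤ 2 ^ (s-1) * q - 2 ^ (s-1) := by
      calc _ ≤ t * ((Finset.range m).filter (fun r => r * (r - 1) % m = 0)).card := hbound
        _ ≤ t * 2 ^ s := Nat.mul_le_mul_left _ hsol
        _ = 2 ^ (s - 1) * q - 2 ^ (s-1) := by
            have h1 : (2:ℕ) ^ s = 2 ^ (s-1) * 2 := by
              conv_lhs => rw [show s = (s-1)+1 from by omega]
              rw [pow_succ]
            have h2 : q - 1 = 2 * t := by omega
            have h3 : t * 2 ^ s = (q - 1) * 2 ^ (s-1) := by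
              rw [h1, h2]; ring
            rw [h3, Nat.sub_mul, one_mul, mul_comm]
    omega
end
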